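/- Let M ≥ 1 and let 0 = x_0 < x_1 < ⋯ < x_M = 1 be a partition of [0,1] with cells I_j = (x_j, x_{j+1}). Let p_0, …, p_{M−1} be polynomials (the local pieces of a DG function), with indices taken modulo M (periodicity: p_M := p_0 and node x_M identified with x_0). Define the DG upwind energy form (for advection speed a = 1, upwind numerical flux û(x_j) = p_{j−1}(x_j)) by A := Σ_{j=0}^{M−1} [ ∫_{x_j}^{x_{j+1}} p_j(x) p_j'(x) dx − p_j(x_{j+1}) p_j(x_{j+1}) + p_{j−1}(x_j) p_j(x_j) ]. Then A = −(1/2) Σ_{j=0}^{M−1} ( p_j(x_j) − p_{j−1}(x_j) )², where the node values are taken periodically; in particular A ≤ 0, which gives the L² stability of the semi-discrete discontinuous Galerkin scheme with upwind flux for u_t + u_x = 0 with periodic boundary conditions. -/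

import Mathlib

/-! Since `q q'` is the derivative of `q² / 2`, the `j`-th summand of `A` is
`−(p_j(x_j) − p_{j−1}(x_j))² / 2` plus the difference `(g_{j−1} − g_j) / 2` of the outflow
energies `g_k = p_k(x_{k+1})²`, which telescopes to zero around the periodic mesh. -/

theorem Polynomial.integral_eval_mul_eval_derivative (q : Polynomial ℝ) (a b : ℝ) :
    ∫ t in a..b, q.eval t * (Polynomial.derivative q).eval t = (q.eval b ^ 2 - q.eval a ^ 2) / 2 := by
  have hderiv : ∀ t : ℝ, HasDerivAt (fun s => q.eval s ^ 2 / 2)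
      (q.eval t * (Polynomial.derivative q).eval t) t := fun t => by
    simpa [mul_comm, mul_assoc, mul_div_assoc] using ((q.hasDerivAt t).pow 2).div_const 2
  have hcont : Continuous fun t => q.eval t * (Polynomial.derivative q).eval t := by fun_prop
  rw [intervalIntegral.integral_eq_sub_of_hasDerivAt (fun t _ => hderiv t)
    (hcont.intervalIntegrable a b), sub_div]

namespace Finset

theorem sum_range_comp_pred_mod {β : Type*} [AddCommMonoid β] (M : ℕ) (f : ℕ → β) :
    ∑ j ∈ range M, f ((j + M - 1) % M) = ∑ j ∈ range M, f j := by
  cases M with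
  | zero => rfl
  | succ n =>
    have hpred : ∀ j ∈ range n, (j + 1 + (n + 1) - 1) % (n + 1) = j := fun j hj => by
      rw [show j + 1 + (n + 1) - 1 = j + (n + 1) by omega, Nat.add_mod_right,
        Nat.mod_eq_of_lt (by rw [mem_range] at hj; omega)]
    rw [sum_range_succ', sum_range_succ, sum_congr rfl fun j hj => by rw [hpred j hj]]
    simp

theorem sum_range_sub_comp_pred_mod {β : Type*} [AddCommGroup β] (M : ℕ) (g : ℕ → β) :
    ∑ j ∈ range M, (g ((j + M - 1) % M) - g j) = 0 := by
  rw [sum_sub_distrib, sum_range_comp_pred_mod, sub_self]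

end Finset

theorem dg_upwind_energy_general (M : ℕ) (x : ℕ → ℝ)
    (p : ℕ → Polynomial ℝ) :
    (∑ j ∈ Finset.range M,
        ((∫ t in (x j)..(x (j + 1)),
            (p j).eval t * ((Polynomial.derivative (p j)).eval t))
          - (p j).eval (x (j + 1)) * (p j).eval (x (j + 1))
          + (p ((j + M - 1) % M)).eval (x ((j + M - 1) % M + 1)) * (p j).eval (x j)))
      = -(1 / 2) * ∑ j ∈ Finset.range M,
          ((p j).eval (x j) - (p ((j + M - 1) % M)).eval (x ((j + M - 1) % M + 1))) ^ 2
    ∧ (∑ j ∈ Finset.range M,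
        ((∫ t in (x j)..(x (j + 1)),
            (p j).eval t * ((Polynomial.derivative (p j)).eval t))
          - (p j).eval (x (j + 1)) * (p j).eval (x (j + 1))
          + (p ((j + M - 1) % M)).eval (x ((j + M - 1) % M + 1)) * (p j).eval (x j)))
        ≤ 0 := by
  refine (and_iff_left_of_imp fun henergy => henergy ▸
    mul_nonpos_of_nonpos_of_nonneg (by norm_num) (Finset.sum_nonneg fun j _ => sq_nonneg _)).2 ?_
  set g : ℕ → ℝ := fun k => (p k).eval (x (k + 1)) ^ 2 with hg
  have hcell : ∀ j, (∫ t in (x j)..(x (j + 1)),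
        (p j).eval t * ((Polynomial.derivative (p j)).eval t))
      - (p j).eval (x (j + 1)) * (p j).eval (x (j + 1))
      + (p ((j + M - 1) % M)).eval (x ((j + M - 1) % M + 1)) * (p j).eval (x j)
      = -(1 / 2) * ((p j).eval (x j) - (p ((j + M - 1) % M)).eval (x ((j + M - 1) % M + 1))) ^ 2
        + (g ((j + M - 1) % M) - g j) / 2 := fun j => by
    rw [Polynomial.integral_eval_mul_eval_derivative, hg]
    ring
  rw [Finset.sum_congr rfl fun j _ => hcell j, Finset.sum_add_distrib, ← Finset.sum_div,
    Finset.sum_range_sub_comp_pred_mod, zero_div, add_zero, Finset.mul_sum]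

/-- The DG upwind energy identity for `u_t + u_x = 0` with periodic boundary
conditions: on a partition `0 = x_0 < ⋯ < x_M = 1` with local polynomial pieces
`p_0, …, p_{M-1}` (indices modulo `M`, the node `x_M` identified with `x_0`, so the
upwind flux at `x_j` is the left trace `p_{j-1}(x_j)`), the energy form
`A = Σ_j [ ∫_{x_j}^{x_{j+1}} p_j p_j' dx − p_j(x_{j+1})² + p_{j−1}(x_j) p_j(x_j) ]`
equals `−(1/2) Σ_j (p_j(x_j) − p_{j−1}(x_j))²`; in particular `A ≤ 0`, giving `L²`
stability of the semi-discrete DG scheme with upwind flux. -/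
theorem dg_upwind_energy (M : ℕ) (hM : 1 ≤ M) (x : ℕ → ℝ)
    (hx0 : x 0 = 0) (hxM : x M = 1) (hmono : ∀ j < M, x j < x (j + 1))
    (p : ℕ → Polynomial ℝ) :
    (∑ j ∈ Finset.range M,
        ((∫ t in (x j)..(x (j + 1)),
            (p j).eval t * ((Polynomial.derivative (p j)).eval t))
          - (p j).eval (x (j + 1)) * (p j).eval (x (j + 1))
          + (p ((j + M - 1) % M)).eval (x ((j + M - 1) % M + 1)) * (p j).eval (x j)))
      = -(1 / 2) * ∑ j ∈ Finset.range M,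
          ((p j).eval (x j) - (p ((j + M - 1) % M)).eval (x ((j + M - 1) % M + 1))) ^ 2
    ∧ (∑ j ∈ Finset.range M,
        ((∫ t in (x j)..(x (j + 1)),
            (p j).eval t * ((Polynomial.derivative (p j)).eval t))
          - (p j).eval (x (j + 1)) * (p j).eval (x (j + 1))
          + (p ((j + M - 1) % M)).eval (x ((j + M - 1) % M + 1)) * (p j).eval (x j)))
        ≤ 0 :=
  dg_upwind_energy_general M x p
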